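/- (Weak duality between problem (3) and its dual (8).) Let J : ℝᵖ → ℝ^{m×n} be a linear map with adjoint J* (with respect to the Frobenius inner product), b ∈ ℝ^{m×n}, λ > 0. Suppose (X, τ, E) ∈ ℝ^{m×n} × ℝᵖ × ℝ^{m×n} satisfies b + Jτ = X + E, and Y ∈ ℝ^{m×n} satisfies J*Y = 0, ‖Y‖ ≤ 1 and ‖Y‖_∞ ≤ λ. Then ⟨Y, b⟩ ≤ ‖X‖_* + λ‖E‖₁. -/

import Mathlib

open scoped Matrix

noncomputable section

/-- Frobenius inner product on real matrices. -/
def finner {m n : ℕ} (A B : Matrix (Fin m) (Fin n) ℝ) : ℝ := ∑ i, ∑ j, A i j * B i j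

/-- Frobenius norm. -/
noncomputable def frobNorm {m n : ℕ} (A : Matrix (Fin m) (Fin n) ℝ) : ℝ := Real.sqrt (finner A A)

/-- Entrywise ℓ1 norm of a matrix. -/
def l1Norm {m n : ℕ} (A : Matrix (Fin m) (Fin n) ℝ) : ℝ := ∑ i, ∑ j, |A i j|

open scoped ComplexOrder in
/-- `Matrix.PosSemidef.sqrt` as it stood in Mathlib (Dec 2024); removed since. -/
noncomputable def Matrix.PosSemidef.sqrt {n 𝕜 : Type*} [Fintype n] [RCLike 𝕜] [DecidableEq n]
    {A : Matrix n n 𝕜} (hA : A.PosSemidef) : Matrix n n 𝕜 :=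
  hA.1.eigenvectorUnitary.1 * Matrix.diagonal ((↑) ∘ (√·) ∘ hA.1.eigenvalues) *
  (star hA.1.eigenvectorUnitary : Matrix n n 𝕜)

/-- Nuclear norm: trace of the PSD square root of XᵀX. -/
noncomputable def nuclearNorm {m n : ℕ} (X : Matrix (Fin m) (Fin n) ℝ) : ℝ :=
  (Matrix.posSemidef_conjTranspose_mul_self X).sqrt.trace

/-- Entrywise soft-thresholding operator. -/
noncomputable def softThresh {m n : ℕ} (μ : ℝ) (X : Matrix (Fin m) (Fin n) ℝ) :
    Matrix (Fin m) (Fin n) ℝ :=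
  Matrix.of fun i j => Real.sign (X i j) * max (|X i j| - μ) 0

/-- Spectral norm: the ℓ²→ℓ² operator norm. -/
noncomputable def matSpectralNorm {m n : ℕ} (Y : Matrix (Fin m) (Fin n) ℝ) : ℝ :=
  ‖LinearMap.toContinuousLinearMap (Matrix.toEuclideanLin Y)‖

/-! Since `b = X + E - Jτ`, the dual objective splits as `⟨Y, X⟩ + ⟨Y, E⟩ - ⟨Y, Jτ⟩`. The last
term is `⟨τ, J*Y⟩ = 0`, and `⟨Y, E⟩ ≤ λ‖E‖₁` entrywise. For the first, expand the trace
`⟨Y, X⟩` in an orthonormal eigenbasis `(v_k)` of `XᵀX` with eigenvalues `σ_k`: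
`⟨Y, X⟩ = ∑ ⟨Y v_k, X v_k⟩ ≤ ∑ ‖Y‖ ‖X v_k‖ = ‖Y‖ ∑ √σ_k = ‖Y‖ ‖X‖_*`. -/

open scoped InnerProductSpace

open scoped ComplexOrder in
lemma Matrix.PosSemidef.trace_sqrt {n 𝕜 : Type*} [Fintype n] [RCLike 𝕜] [DecidableEq n]
    {A : Matrix n n 𝕜} (hA : A.PosSemidef) :
    hA.sqrt.trace = ∑ k, ((√(hA.1.eigenvalues k) : ℝ) : 𝕜) := by
  rw [Matrix.PosSemidef.sqrt, Matrix.trace_mul_comm, ← Matrix.mul_assoc,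
    Unitary.coe_star_mul_self, Matrix.one_mul, Matrix.trace_diagonal]
  rfl

lemma Matrix.norm_toEuclideanLin_eigenvectorBasis {m n : Type*} [Fintype m] [Fintype n]
    [DecidableEq n] (X : Matrix m n ℝ) (k : n) :
    ‖Matrix.toEuclideanLin X
        ((Matrix.posSemidef_conjTranspose_mul_self X).1.eigenvectorBasis k)‖ =
      √((Matrix.posSemidef_conjTranspose_mul_self X).1.eigenvalues k) := by
  rw [Matrix.IsHermitian.eigenvalues_eq, ← Matrix.mulVec_mulVec, Matrix.dotProduct_mulVec,
    ← Matrix.star_mulVec, @norm_eq_sqrt_re_inner ℝ, EuclideanSpace.inner_eq_star_dotProduct,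
    dotProduct_comm]
  rfl

section Frobenius

variable {m n : ℕ}

lemma finner_comm (A B : Matrix (Fin m) (Fin n) ℝ) : finner A B = finner B A := by
  simp only [finner, mul_comm]

lemma finner_add_right (A B C : Matrix (Fin m) (Fin n) ℝ) :
    finner A (B + C) = finner A B + finner A C := by
  simp only [finner, Matrix.add_apply, mul_add, Finset.sum_add_distrib]

lemma finner_sub_right (A B C : Matrix (Fin m) (Fin n) ℝ) :
    finner A (B - C) = finner A B - finner A C := by
  simp only [finner, Matrix.sub_apply, mul_sub, Finset.sum_sub_distrib]

lemma finner_le_mul_l1Norm {A : Matrix (Fin m) (Fin n) ℝ} {c : ℝ}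
    (hA : ∀ i j, |A i j| ≤ c) (E : Matrix (Fin m) (Fin n) ℝ) :
    finner A E ≤ c * l1Norm E := by
  simp only [finner, l1Norm, Finset.mul_sum]
  refine Finset.sum_le_sum fun i _ => Finset.sum_le_sum fun j _ => ?_
  calc A i j * E i j ≤ |A i j| * |E i j| := (le_abs_self _).trans (abs_mul _ _).le
    _ ≤ c * |E i j| := by gcongr; exact hA i j

lemma finner_eq_zero_of_adjoint_eq_zero {p : ℕ}
    {J : (Fin p → ℝ) →ₗ[ℝ] Matrix (Fin m) (Fin n) ℝ}
    {Jadj : Matrix (Fin m) (Fin n) ℝ →ₗ[ℝ] (Fin p → ℝ)}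
    (hadj : ∀ v A, finner (J v) A = ∑ i, v i * Jadj A i)
    {Y : Matrix (Fin m) (Fin n) ℝ} (hY : Jadj Y = 0) (v : Fin p → ℝ) :
    finner Y (J v) = 0 := by
  simp [finner_comm Y, hadj, hY]

lemma finner_eq_sum_inner_orthonormalBasis {ι : Type*} [Fintype ι]
    (Y X : Matrix (Fin m) (Fin n) ℝ) (b : OrthonormalBasis ι ℝ (EuclideanSpace ℝ (Fin n))) :
    finner Y X = ∑ k, ⟪Matrix.toEuclideanLin Y (b k), Matrix.toEuclideanLin X (b k)⟫_ℝ := by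
  set row : Matrix (Fin m) (Fin n) ℝ → Fin m → EuclideanSpace ℝ (Fin n) :=
    fun A i => WithLp.toLp 2 (fun j => A i j)
  have hrow : ∀ A i k, Matrix.toEuclideanLin A (b k) i = ⟪b k, row A i⟫_ℝ := by
    intro A i k
    simp [row, PiLp.inner_apply, Matrix.mulVec, dotProduct]
  calc finner Y X = ∑ i, ⟪row Y i, row X i⟫_ℝ := by
        simp [finner, row, PiLp.inner_apply, mul_comm]
    _ = ∑ i, ∑ k, ⟪row Y i, b k⟫_ℝ * ⟪b k, row X i⟫_ℝ := by
        simp_rw [b.sum_inner_mul_inner]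
    _ = _ := by
        rw [Finset.sum_comm]
        simp_rw [real_inner_comm (b _), ← hrow, PiLp.inner_apply (Matrix.toEuclideanLin Y _),
          RCLike.inner_apply', conj_trivial]

lemma nuclearNorm_eq_sum_sqrt_eigenvalues (X : Matrix (Fin m) (Fin n) ℝ) :
    nuclearNorm X = ∑ k, √((Matrix.posSemidef_conjTranspose_mul_self X).1.eigenvalues k) :=
  (Matrix.posSemidef_conjTranspose_mul_self X).trace_sqrt

lemma nuclearNorm_nonneg (X : Matrix (Fin m) (Fin n) ℝ) : 0 ≤ nuclearNorm X := by
  rw [nuclearNorm_eq_sum_sqrt_eigenvalues]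
  exact Finset.sum_nonneg fun k _ => Real.sqrt_nonneg _

lemma finner_le_matSpectralNorm_mul_nuclearNorm (Y X : Matrix (Fin m) (Fin n) ℝ) :
    finner Y X ≤ matSpectralNorm Y * nuclearNorm X := by
  set hX := Matrix.posSemidef_conjTranspose_mul_self X
  rw [finner_eq_sum_inner_orthonormalBasis Y X hX.1.eigenvectorBasis,
    nuclearNorm_eq_sum_sqrt_eigenvalues, Finset.mul_sum]
  refine Finset.sum_le_sum fun k _ => ?_
  set v := hX.1.eigenvectorBasis k
  calc ⟪Matrix.toEuclideanLin Y v, Matrix.toEuclideanLin X v⟫_ℝ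
      ≤ ‖Matrix.toEuclideanLin Y v‖ * ‖Matrix.toEuclideanLin X v‖ := real_inner_le_norm _ _
    _ ≤ matSpectralNorm Y * ‖Matrix.toEuclideanLin X v‖ := by
        gcongr
        simpa [v, matSpectralNorm] using
          (LinearMap.toContinuousLinearMap (Matrix.toEuclideanLin Y)).le_opNorm v
    _ = matSpectralNorm Y * √(hX.1.eigenvalues k) := by
        rw [Matrix.norm_toEuclideanLin_eigenvectorBasis]

end Frobenius

theorem TILT_weak_duality_general {m n p : ℕ}
    (J : (Fin p → ℝ) →ₗ[ℝ] Matrix (Fin m) (Fin n) ℝ)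
    (Jadj : Matrix (Fin m) (Fin n) ℝ →ₗ[ℝ] (Fin p → ℝ))
    (hadj : ∀ (v : Fin p → ℝ) (A : Matrix (Fin m) (Fin n) ℝ),
      finner (J v) A = ∑ i, v i * Jadj A i)
    (b X E Y : Matrix (Fin m) (Fin n) ℝ) (τ : Fin p → ℝ) (lam : ℝ)
    (hfeas : b + J τ = X + E)
    (hdual₁ : Jadj Y = 0)
    (hdual₂ : matSpectralNorm Y ≤ 1)
    (hdual₃ : ∀ i j, |Y i j| ≤ lam) :
    finner Y b ≤ nuclearNorm X + lam * l1Norm E := by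
  have hb : b = X + E - J τ := eq_sub_of_add_eq hfeas
  have hYX : finner Y X ≤ nuclearNorm X :=
    (finner_le_matSpectralNorm_mul_nuclearNorm Y X).trans
      (mul_le_of_le_one_left (nuclearNorm_nonneg X) hdual₂)
  rw [hb, finner_sub_right, finner_add_right, finner_eq_zero_of_adjoint_eq_zero hadj hdual₁,
    sub_zero]
  exact add_le_add hYX (finner_le_mul_l1Norm hdual₃ E)

/-- Weak duality between problem (3) and its dual (8). If `(X, τ, E)` is
primal feasible and `Y` is dual feasible (`J*Y = 0`, `‖Y‖ ≤ 1`, `‖Y‖_∞ ≤ λ`), then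
`⟨Y, b⟩ ≤ ‖X‖_* + λ‖E‖₁`. -/
theorem TILT_weak_duality {m n p : ℕ}
    (J : (Fin p → ℝ) →ₗ[ℝ] Matrix (Fin m) (Fin n) ℝ)
    (Jadj : Matrix (Fin m) (Fin n) ℝ →ₗ[ℝ] (Fin p → ℝ))
    (hadj : ∀ (v : Fin p → ℝ) (A : Matrix (Fin m) (Fin n) ℝ),
      finner (J v) A = ∑ i, v i * Jadj A i)
    (b X E Y : Matrix (Fin m) (Fin n) ℝ) (τ : Fin p → ℝ) (lam : ℝ) (hlam : 0 < lam)
    (hfeas : b + J τ = X + E)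
    (hdual₁ : Jadj Y = 0)
    (hdual₂ : matSpectralNorm Y ≤ 1)
    (hdual₃ : ∀ i j, |Y i j| ≤ lam) :
    finner Y b ≤ nuclearNorm X + lam * l1Norm E :=
  TILT_weak_duality_general J Jadj hadj b X E Y τ lam hfeas hdual₁ hdual₂ hdual₃
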